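/- For all n ≥ 2, 6·K₃(n) = 5·j₃(n) + 3·j₃(n−1) − 5·j₃(n−2), where j₃ is the third-order Jacobsthal-Lucas sequence and K₃ is the Modified third-order Jacobsthal sequence. -/
import Mathlib


def j3 : ℕ → ℤ
  | 0 => 2
  | 1 => 1
  | 2 => 5
  | n + 3 => j3 (n + 2) + j3 (n + 1) + 2 * j3 n

def K3 : ℕ → ℤ
  | 0 => 3
  | 1 => 1
  | 2 => 3
  | n + 3 => K3 (n + 2) + K3 (n + 1) + 2 * K3 n

lemma aux14 : ∀ n : ℕ, 6 * K3 (n + 2) = 5 * j3 (n + 2) + 3 * j3 (n + 1) - 5 * j3 n := by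
  intro n
  induction n using Nat.strong_induction_on with
  | _ n ih =>
    match n with
    | 0 => simp [j3, K3]
    | 1 => norm_num [j3, K3]
    | 2 => norm_num [j3, K3]
    | m + 3 =>
      have h0 := ih m (by omega)
      have h1 := ih (m + 1) (by omega)
      have h2 := ih (m + 2) (by omega)
      have hK : K3 (m + 3 + 2) = K3 (m + 4) + K3 (m + 3) + 2 * K3 (m + 2) := rfl
      have hj : j3 (m + 3 + 2) = j3 (m + 4) + j3 (m + 3) + 2 * j3 (m + 2) := rfl
      have hj1 : j3 (m + 3 + 1) = j3 (m + 3) + j3 (m + 2) + 2 * j3 (m + 1) := rfl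
      have hj0 : j3 (m + 3) = j3 (m + 2) + j3 (m + 1) + 2 * j3 m := rfl
      simp only [hK, hj] at *
      linarith

theorem stmt14 : ∀ n : ℕ, 2 ≤ n →
    6 * K3 n = 5 * j3 n + 3 * j3 (n - 1) - 5 * j3 (n - 2) := by
  intro n hn
  obtain ⟨m, rfl⟩ := Nat.exists_eq_add_of_le hn
  have := aux14 m
  simpa [Nat.add_comm, Nat.add_sub_cancel] using this
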